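/- Let G be a finite simple connected undirected graph in which every vertex has degree at least 1, let y be a vertex, let t, r, j be positive integers, and let p ∈ [0,1]. If for every vertex z the lazy simple random walk of length t started at z satisfies Pr(N_t^z(y) ≥ r) ≤ p, then for every vertex x the lazy simple random walk of length t started at x satisfies Pr(N_t^x(y) ≥ r·j) ≤ p^j. -/

import Mathlib

open Finset

section Defs

variable {V : Type} [Fintype V] [DecidableEq V]

/-- Transition kernel of the lazy simple random walk on `G`. -/
noncomputable def lazyStep (G : SimpleGraph V) [DecidableRel G.Adj] (u v : V) : ℝ :=
  if u = v then 1 / 2 else if G.Adj u v then 1 / (2 * (G.degree u : ℝ)) else 0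

/-- Law (probability mass function) of the lazy random walk of length `t` started at `x`,
as a function on trajectories `Fin (t+1) → V`. -/
noncomputable def lazyWalkLaw (G : SimpleGraph V) [DecidableRel G.Adj] (x : V) (t : ℕ)
    (f : Fin (t + 1) → V) : ℝ :=
  (if f 0 = x then 1 else 0) * ∏ i : Fin t, lazyStep G (f i.castSucc) (f i.succ)

/-- Probability of an event `E` of trajectories, under the lazy walk law. -/
noncomputable def lazyWalkPr (G : SimpleGraph V) [DecidableRel G.Adj] (x : V) (t : ℕ)
    (E : Set (Fin (t + 1) → V)) : ℝ :=
  ∑ f : Fin (t + 1) → V, E.indicator (lazyWalkLaw G x t) f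

/-- Expectation of a random variable `N` of the trajectory, under the lazy walk law. -/
noncomputable def lazyWalkExp (G : SimpleGraph V) [DecidableRel G.Adj] (x : V) (t : ℕ)
    (N : (Fin (t + 1) → V) → ℝ) : ℝ :=
  ∑ f : Fin (t + 1) → V, lazyWalkLaw G x t f * N f

/-- Number of indices `0 ≤ i ≤ t` at which the trajectory `f` visits `y`. -/
def visits (y : V) {t : ℕ} (f : Fin (t + 1) → V) : ℕ :=
  (Finset.univ.filter fun i => f i = y).card

end Defs

/-! Write `u t x k = Pr_x(N_t(y) ≥ k)`. Conditioning on the first step gives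
`u (t+1) x k = ∑ w, Q(x,w) · u t w (k - [x = y])`. From this recursion, `u` is monotone in `t`,
and induction on `t` gives `u t x (a + b) ≤ u t x a · q` whenever `t ≤ T` and `u T z b ≤ q` for
every `z`: after its `a`-th visit to `y` the walk still has to make `b` more. Taking `a = r·j`,
`b = r`, `q = p` and inducting on `j` gives the bound `p ^ j`.
-/

section LazyWalk

variable {V : Type} [Fintype V] [DecidableEq V] (G : SimpleGraph V) [DecidableRel G.Adj]

lemma lazyStep_nonneg (u v : V) : 0 ≤ lazyStep G u v := by
  unfold lazyStep
  split_ifs <;> positivity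

lemma sum_lazyStep (hdeg : ∀ v : V, 1 ≤ G.degree v) (u : V) : ∑ v, lazyStep G u v = 1 := by
  have hd : (G.degree u : ℝ) ≠ 0 := by have := hdeg u; positivity
  have hsplit : ∀ v, lazyStep G u v = (if u = v then 1 / 2 else 0) +
      (if v ∈ G.neighborFinset u then 1 / (2 * (G.degree u : ℝ)) else 0) := by
    intro v
    by_cases huv : u = v
    · subst huv; simp [lazyStep]
    · simp [lazyStep, huv]
  simp only [hsplit, sum_add_distrib, sum_ite_eq, sum_ite_mem, univ_inter, mem_univ, if_true,
    sum_const, SimpleGraph.card_neighborFinset_eq_degree, nsmul_eq_mul]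
  field_simp
  ring

lemma lazyWalkLaw_nonneg (x : V) (t : ℕ) (f : Fin (t + 1) → V) : 0 ≤ lazyWalkLaw G x t f :=
  mul_nonneg (by split_ifs <;> norm_num) (prod_nonneg fun _ _ => lazyStep_nonneg G _ _)

lemma lazyWalkExp_zero (x : V) (N : (Fin 1 → V) → ℝ) : lazyWalkExp G x 0 N = N fun _ => x := by
  rw [lazyWalkExp, ← (Equiv.funUnique (Fin 1) V).symm.sum_comp]
  simp only [lazyWalkLaw, Equiv.funUnique_symm_apply, uniqueElim_const, univ_eq_empty, prod_empty,
    mul_one, ite_mul, one_mul, zero_mul, sum_ite_eq', mem_univ, if_true]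
  rfl

lemma lazyWalkLaw_cons (x v : V) (t : ℕ) (g : Fin (t + 1) → V) :
    lazyWalkLaw G x (t + 1) (Fin.cons v g) =
      (if v = x then 1 else 0) * ∑ w, lazyStep G v w * lazyWalkLaw G w t g := by
  rw [sum_eq_single (g 0)]
  · simp [lazyWalkLaw, Fin.prod_univ_succ]
  · intro w _ hw
    simp [lazyWalkLaw, Ne.symm hw]
  · simp

lemma lazyWalkExp_succ (x : V) (t : ℕ) (N : (Fin (t + 1 + 1) → V) → ℝ) :
    lazyWalkExp G x (t + 1) N =
      ∑ w, lazyStep G x w * lazyWalkExp G w t fun g => N (Fin.cons x g) := by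
  rw [lazyWalkExp, ← (Fin.consEquiv fun _ => V).sum_comp, Fintype.sum_prod_type]
  change ∑ v, ∑ g, lazyWalkLaw G x (t + 1) (Fin.cons v g) * N (Fin.cons v g) = _
  rw [sum_eq_single x (fun v _ hv => by simp [lazyWalkLaw_cons, hv]) (by simp)]
  simp only [lazyWalkLaw_cons, if_pos, one_mul, lazyWalkExp, mul_sum, sum_mul, mul_assoc]
  exact sum_comm

lemma lazyWalkExp_const (hdeg : ∀ v : V, 1 ≤ G.degree v) (t : ℕ) (x : V) (c : ℝ) :
    lazyWalkExp G x t (fun _ => c) = c := by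
  induction t generalizing x with
  | zero => exact lazyWalkExp_zero G x _
  | succ t ih => simp only [lazyWalkExp_succ, ih, ← sum_mul, sum_lazyStep G hdeg, one_mul]

lemma lazyWalkPr_eq_lazyWalkExp (x : V) (t : ℕ) (E : Set (Fin (t + 1) → V)) :
    lazyWalkPr G x t E = lazyWalkExp G x t (E.indicator 1) := by
  refine sum_congr rfl fun f _ => ?_
  by_cases hf : f ∈ E <;> simp [hf]

lemma lazyWalkPr_nonneg (x : V) (t : ℕ) (E : Set (Fin (t + 1) → V)) : 0 ≤ lazyWalkPr G x t E :=
  sum_nonneg fun f _ => Set.indicator_nonneg (fun f _ => lazyWalkLaw_nonneg G x t f) f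

end LazyWalk

lemma visits_cons {V : Type} [DecidableEq V] (y v : V) {t : ℕ} (g : Fin (t + 1) → V) :
    visits y (Fin.cons v g : Fin (t + 1 + 1) → V) = (if v = y then 1 else 0) + visits y g := by
  simp only [visits, card_filter, Fin.sum_univ_succ, Fin.cons_zero, Fin.cons_succ]

section Visits

variable {V : Type} [Fintype V] [DecidableEq V] (G : SimpleGraph V) [DecidableRel G.Adj] (y : V)

lemma lazyWalkPr_visits_of_length_zero (x : V) (k : ℕ) :
    lazyWalkPr G x 0 {f | k ≤ visits y f} = if k ≤ (if x = y then 1 else 0) then 1 else 0 := by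
  rw [lazyWalkPr_eq_lazyWalkExp, lazyWalkExp_zero]
  by_cases hxy : x = y <;> simp [visits, Set.indicator_apply, hxy]

lemma lazyWalkPr_visits_of_length_succ (x : V) (t k : ℕ) :
    lazyWalkPr G x (t + 1) {f | k ≤ visits y f} =
      ∑ w, lazyStep G x w * lazyWalkPr G w t {f | k - (if x = y then 1 else 0) ≤ visits y f} := by
  simp only [lazyWalkPr_eq_lazyWalkExp, lazyWalkExp_succ]
  congr! 4 with w _ g
  simp only [Set.indicator_apply, Set.mem_ofPred_eq, visits_cons]
  split_ifs <;> first | rfl | omega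

lemma lazyWalkPr_zero_le_visits (hdeg : ∀ v : V, 1 ≤ G.degree v) (x : V) (t : ℕ) :
    lazyWalkPr G x t {f | 0 ≤ visits y f} = 1 := by
  simp only [zero_le, Set.ofPred_true, Set.indicator_univ, lazyWalkPr_eq_lazyWalkExp]
  exact lazyWalkExp_const G hdeg t x 1

lemma lazyWalkPr_visits_le_length_succ (hdeg : ∀ v : V, 1 ≤ G.degree v) (t : ℕ) (x : V) (k : ℕ) :
    lazyWalkPr G x t {f | k ≤ visits y f} ≤ lazyWalkPr G x (t + 1) {f | k ≤ visits y f} := by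
  induction t generalizing x k with
  | zero =>
    rw [lazyWalkPr_visits_of_length_zero, lazyWalkPr_visits_of_length_succ]
    by_cases hk : k ≤ (if x = y then 1 else 0)
    · rw [if_pos hk, Nat.sub_eq_zero_of_le hk]
      simp only [lazyWalkPr_zero_le_visits G y hdeg, mul_one, sum_lazyStep G hdeg, le_refl]
    · rw [if_neg hk]
      exact sum_nonneg fun w _ => mul_nonneg (lazyStep_nonneg G x w) (lazyWalkPr_nonneg G w 0 _)
  | succ t ih =>
    rw [lazyWalkPr_visits_of_length_succ G y x t, lazyWalkPr_visits_of_length_succ G y x (t + 1)]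
    exact sum_le_sum fun w _ => mul_le_mul_of_nonneg_left (ih w _) (lazyStep_nonneg G x w)

lemma monotone_lazyWalkPr_visits (hdeg : ∀ v : V, 1 ≤ G.degree v) (x : V) (k : ℕ) :
    Monotone fun t => lazyWalkPr G x t {f | k ≤ visits y f} :=
  monotone_nat_of_le_succ fun t => lazyWalkPr_visits_le_length_succ G y hdeg t x k

lemma lazyWalkPr_visits_add_le (hdeg : ∀ v : V, 1 ≤ G.degree v) {T b : ℕ} {q : ℝ}
    (hq : ∀ z, lazyWalkPr G z T {f | b ≤ visits y f} ≤ q) {t : ℕ} (ht : t ≤ T) (x : V) (a : ℕ) :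
    lazyWalkPr G x t {f | a + b ≤ visits y f} ≤ lazyWalkPr G x t {f | a ≤ visits y f} * q := by
  induction t generalizing x a with
  | zero =>
    have hqb : lazyWalkPr G x 0 {f | b ≤ visits y f} ≤ q :=
      (monotone_lazyWalkPr_visits G y hdeg x b (Nat.zero_le T)).trans (hq x)
    have hq0 := (lazyWalkPr_nonneg G x 0 _).trans hqb
    rw [lazyWalkPr_visits_of_length_zero] at hqb ⊢
    rw [lazyWalkPr_visits_of_length_zero]
    split_ifs at hqb ⊢ <;> first | omega | linarith
  | succ t ih =>
    rcases Nat.eq_zero_or_pos a with rfl | ha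
    · rw [zero_add, lazyWalkPr_zero_le_visits G y hdeg, one_mul]
      exact (monotone_lazyWalkPr_visits G y hdeg x b ht).trans (hq x)
    · rw [lazyWalkPr_visits_of_length_succ, lazyWalkPr_visits_of_length_succ, sum_mul]
      refine sum_le_sum fun w _ => ?_
      rw [mul_assoc, show a + b - (if x = y then 1 else 0) = a - (if x = y then 1 else 0) + b by
        split_ifs <;> omega]
      exact mul_le_mul_of_nonneg_left (ih (by omega) w _) (lazyStep_nonneg G x w)

end Visits

theorem statement_5_general (V : Type) [Fintype V] [DecidableEq V]
    (G : SimpleGraph V) [DecidableRel G.Adj]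
    (hdeg : ∀ v : V, 1 ≤ G.degree v)
    (y : V) (t r j : ℕ)
    (p : ℝ) (hp0 : 0 ≤ p)
    (h : ∀ z : V, lazyWalkPr G z t {f | r ≤ visits y f} ≤ p) :
    ∀ x : V, lazyWalkPr G x t {f | r * j ≤ visits y f} ≤ p ^ j := by
  induction j with
  | zero =>
    intro x
    rw [mul_zero, lazyWalkPr_zero_le_visits G y hdeg, pow_zero]
  | succ j ih =>
    intro x
    calc lazyWalkPr G x t {f | r * (j + 1) ≤ visits y f}
        = lazyWalkPr G x t {f | r * j + r ≤ visits y f} := by rw [mul_add_one]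
      _ ≤ lazyWalkPr G x t {f | r * j ≤ visits y f} * p :=
        lazyWalkPr_visits_add_le G y hdeg h le_rfl x (r * j)
      _ ≤ p ^ j * p := mul_le_mul_of_nonneg_right (ih x) hp0
      _ = p ^ (j + 1) := (pow_succ p j).symm

/-- if for every starting vertex `z` we have `Pr(N_t^z(y) ≥ r) ≤ p`, then
for every starting vertex `x` we have `Pr(N_t^x(y) ≥ r·j) ≤ p^j`. -/
theorem statement_5 (V : Type) [Fintype V] [DecidableEq V]
    (G : SimpleGraph V) [DecidableRel G.Adj]
    (hconn : G.Connected) (hdeg : ∀ v : V, 1 ≤ G.degree v)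
    (y : V) (t r j : ℕ) (ht : 0 < t) (hr : 0 < r) (hj : 0 < j)
    (p : ℝ) (hp0 : 0 ≤ p) (hp1 : p ≤ 1)
    (h : ∀ z : V, lazyWalkPr G z t {f | r ≤ visits y f} ≤ p) :
    ∀ x : V, lazyWalkPr G x t {f | r * j ≤ visits y f} ≤ p ^ j :=
  statement_5_general V G hdeg y t r j p hp0 h
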